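/- arXiv:1105.1566 — 10 statements merged into one kernel-verified Lean document; each statement's English description precedes it below -/
import Mathlib

section
/- Let f, g : [a,b] → ℝ be continuous and positive, let p > 1 with 1/p + 1/q = 1, and suppose 0 < m ≤ f(x)/g(x) ≤ M < ∞ for all x ∈ [a,b]. Then (∫_a^b f(x) dx)^(1/p) · (∫_a^b g(x) dx)^(1/q) ≤ (M/m)^(1/(pq)) · ∫_a^b f(x)^(1/p) g(x)^(1/q) dx. -/
/-! Since `m ≤ f / g ≤ M`, writing `f = f ^ (1/p) * f ^ (1/q)` and `g = g ^ (1/p) * g ^ (1/q)` gives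
the pointwise bounds `f ≤ M ^ (1/q) * f ^ (1/p) * g ^ (1/q)` and
`g ≤ m ^ (-1/p) * f ^ (1/p) * g ^ (1/q)`. Integrating, raising to the powers `1/p` and `1/q` and
multiplying, the constants combine to `(M / m) ^ (1/(pq))` and the two copies of
`∫ f ^ (1/p) * g ^ (1/q)` to a single one. -/

open MeasureTheory

namespace Real

lemma le_rpow_mul_rpow_mul_of_le_mul {x y c s t : ℝ} (hx : 0 ≤ x) (hy : 0 ≤ y) (hc : 0 ≤ c)
    (ht : 0 ≤ t) (hst : s + t = 1) (hxy : x ≤ c * y) : x ≤ c ^ t * (x ^ s * y ^ t) := by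
  calc x = x ^ s * x ^ t := by rw [← rpow_add' hx (by simp [hst]), hst, rpow_one]
    _ ≤ x ^ s * (c * y) ^ t := by gcongr
    _ = c ^ t * (x ^ s * y ^ t) := by rw [mul_rpow hc hy]; ring

lemma rpow_mul_rpow_le_of_le_mul {A B I c d s t : ℝ} (hA : 0 ≤ A) (hB : 0 ≤ B) (hI : 0 ≤ I)
    (hc : 0 ≤ c) (hd : 0 ≤ d) (hs : 0 ≤ s) (ht : 0 ≤ t) (hst : s + t = 1)
    (hAI : A ≤ c * I) (hBI : B ≤ d * I) : A ^ s * B ^ t ≤ c ^ s * d ^ t * I := by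
  calc A ^ s * B ^ t ≤ (c * I) ^ s * (d * I) ^ t := by gcongr
    _ = c ^ s * d ^ t * (I ^ s * I ^ t) := by rw [mul_rpow hc hI, mul_rpow hd hI]; ring
    _ = c ^ s * d ^ t * I := by rw [← rpow_add' hI (by simp [hst]), hst, rpow_one]

end Real

namespace MeasureTheory

variable {α : Type*} [MeasurableSpace α] {μ : Measure α} {f g : α → ℝ} {s t : ℝ}

lemma Integrable.rpow_mul_rpow (hf : Integrable f μ) (hg : Integrable g μ)
    (hf0 : 0 ≤ᵐ[μ] f) (hg0 : 0 ≤ᵐ[μ] g) (hs : 0 ≤ s) (ht : 0 ≤ t) (hst : s + t = 1) :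
    Integrable (fun x ↦ f x ^ s * g x ^ t) μ := by
  refine ((hf.const_mul s).add (hg.const_mul t)).mono' ?_ ?_
  · exact ((hf.1.aemeasurable.pow_const s).mul
      (hg.1.aemeasurable.pow_const t)).aestronglyMeasurable
  · filter_upwards [hf0, hg0] with x hfx hgx
    rw [Real.norm_of_nonneg (mul_nonneg (Real.rpow_nonneg hfx s) (Real.rpow_nonneg hgx t))]
    exact Real.geom_mean_le_arith_mean2_weighted hs ht hfx hgx hst

theorem integral_rpow_mul_integral_rpow_le {m M : ℝ} (hs : 0 ≤ s) (ht : 0 ≤ t) (hst : s + t = 1)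
    (hm : 0 < m) (hmM : m ≤ M) (hf : Integrable f μ) (hg : Integrable g μ) (hg0 : 0 ≤ᵐ[μ] g)
    (hmg : ∀ᵐ x ∂μ, m * g x ≤ f x) (hfM : ∀ᵐ x ∂μ, f x ≤ M * g x) :
    (∫ x, f x ∂μ) ^ s * (∫ x, g x ∂μ) ^ t ≤ (M / m) ^ (s * t) * ∫ x, f x ^ s * g x ^ t ∂μ := by
  have hM : 0 ≤ M := hm.le.trans hmM
  have hf0 : 0 ≤ᵐ[μ] f := by
    filter_upwards [hg0, hmg] with x hgx hx
    exact (mul_nonneg hm.le hgx).trans hx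
  have hh := hf.rpow_mul_rpow hg hf0 hg0 hs ht hst
  have hfh : ∫ x, f x ∂μ ≤ M ^ t * ∫ x, f x ^ s * g x ^ t ∂μ := by
    rw [← integral_const_mul]
    refine integral_mono_ae hf (hh.const_mul _) ?_
    filter_upwards [hf0, hg0, hfM] with x hfx hgx hx
    exact Real.le_rpow_mul_rpow_mul_of_le_mul hfx hgx hM ht hst hx
  have hgh : ∫ x, g x ∂μ ≤ m⁻¹ ^ s * ∫ x, f x ^ s * g x ^ t ∂μ := by
    rw [← integral_const_mul]
    refine integral_mono_ae hg (hh.const_mul _) ?_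
    filter_upwards [hf0, hg0, hmg] with x hfx hgx hx
    have hgf : g x ≤ m⁻¹ * f x := by rwa [inv_mul_eq_div, le_div_iff₀' hm]
    simpa only [mul_comm (g x ^ t)] using
      Real.le_rpow_mul_rpow_mul_of_le_mul hgx hfx (inv_nonneg.2 hm.le) hs
        ((add_comm t s).trans hst) hgf
  have hh0 : 0 ≤ ∫ x, f x ^ s * g x ^ t ∂μ := integral_nonneg_of_ae <| by
    filter_upwards [hf0, hg0] with x hfx hgx
    exact mul_nonneg (Real.rpow_nonneg hfx s) (Real.rpow_nonneg hgx t)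
  calc (∫ x, f x ∂μ) ^ s * (∫ x, g x ∂μ) ^ t
      ≤ (M ^ t) ^ s * (m⁻¹ ^ s) ^ t * ∫ x, f x ^ s * g x ^ t ∂μ :=
        Real.rpow_mul_rpow_le_of_le_mul (integral_nonneg_of_ae hf0) (integral_nonneg_of_ae hg0) hh0
          (by positivity) (by positivity) hs ht hst hfh hgh
    _ = (M / m) ^ (s * t) * ∫ x, f x ^ s * g x ^ t ∂μ := by
        rw [← Real.rpow_mul hM, ← Real.rpow_mul (inv_nonneg.2 hm.le), mul_comm t s,
          ← Real.mul_rpow hM (inv_nonneg.2 hm.le), div_eq_mul_inv]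

end MeasureTheory

theorem reverse_holder_ratio_general (a b p q m M : ℝ) (hab : a < b) (hp : 1 < p)
    (hpq : 1 / p + 1 / q = 1) (f g : ℝ → ℝ)
    (hfc : ContinuousOn f (Set.Icc a b)) (hgc : ContinuousOn g (Set.Icc a b))
    (hgpos : ∀ x ∈ Set.Icc a b, 0 < g x)
    (hm : 0 < m) (hbound : ∀ x ∈ Set.Icc a b, m ≤ f x / g x ∧ f x / g x ≤ M) :
    (∫ x in a..b, f x) ^ (1 / p) * (∫ x in a..b, g x) ^ (1 / q) ≤
      (M / m) ^ (1 / (p * q)) * ∫ x in a..b, f x ^ (1 / p) * g x ^ (1 / q) := by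
  have hp0 : 0 < p := one_pos.trans hp
  have hs : 0 ≤ 1 / p := by positivity
  have ht : 0 ≤ 1 / q := by linarith [(div_lt_one hp0).2 hp]
  have ha : a ∈ Set.Icc a b := Set.left_mem_Icc.2 hab.le
  have hIoc : Set.Ioc a b ⊆ Set.Icc a b := Set.Ioc_subset_Icc_self
  simp only [intervalIntegral.integral_of_le hab.le, ← one_div_mul_one_div]
  refine integral_rpow_mul_integral_rpow_le hs ht hpq hm ((hbound a ha).1.trans (hbound a ha).2)
    (hfc.integrableOn_Icc.mono_set hIoc) (hgc.integrableOn_Icc.mono_set hIoc)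
    (ae_restrict_of_forall_mem measurableSet_Ioc fun x hx ↦ (hgpos x (hIoc hx)).le)
    (ae_restrict_of_forall_mem measurableSet_Ioc fun x hx ↦ ?_)
    (ae_restrict_of_forall_mem measurableSet_Ioc fun x hx ↦ ?_)
  · exact (le_div_iff₀ (hgpos x (hIoc hx))).1 (hbound x (hIoc hx)).1
  · exact (div_le_iff₀ (hgpos x (hIoc hx))).1 (hbound x (hIoc hx)).2

theorem reverse_holder_ratio (a b p q m M : ℝ) (hab : a < b) (hp : 1 < p)
    (hpq : 1 / p + 1 / q = 1) (f g : ℝ → ℝ)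
    (hfc : ContinuousOn f (Set.Icc a b)) (hgc : ContinuousOn g (Set.Icc a b))
    (hfpos : ∀ x ∈ Set.Icc a b, 0 < f x) (hgpos : ∀ x ∈ Set.Icc a b, 0 < g x)
    (hm : 0 < m) (hbound : ∀ x ∈ Set.Icc a b, m ≤ f x / g x ∧ f x / g x ≤ M) :
    (∫ x in a..b, f x) ^ (1 / p) * (∫ x in a..b, g x) ^ (1 / q) ≤
      (M / m) ^ (1 / (p * q)) * ∫ x in a..b, f x ^ (1 / p) * g x ^ (1 / q) :=
  reverse_holder_ratio_general a b p q m M hab hp hpq f g hfc hgc hgpos hm hbound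
end

section
/- Let f, g : [a,b] → ℝ be continuous and positive, let p > 1 with 1/p + 1/q = 1, and suppose 0 < m ≤ f(x)^p / g(x)^q ≤ M < ∞ for all x ∈ [a,b]. Then (∫_a^b f(x)^p dx)^(1/p) · (∫_a^b g(x)^q dx)^(1/q) ≤ (M/m)^(1/(pq)) · ∫_a^b f(x) g(x) dx. -/
/-!
Since `f ^ p / g ^ q ≤ M` and `p / q = p - 1`, we get `f ^ (p - 1) ≤ M ^ (1 / q) * g` pointwise,
hence `f ^ p ≤ M ^ (1 / q) * f g`; symmetrically `m ≤ f ^ p / g ^ q` gives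
`g ^ q ≤ m ^ (-1 / p) * f g`. Integrating both bounds and taking the `1 / p`-th and `1 / q`-th
roots, the two powers of `∫ f g` multiply back to `∫ f g` because `1 / p + 1 / q = 1`.
-/

open Real Set intervalIntegral

namespace Real.HolderConjugate

variable {p q : ℝ}

theorem rpow_le_mul_of_rpow_le_mul_rpow (h : p.HolderConjugate q) {x y C : ℝ}
    (hx : 0 ≤ x) (hy : 0 ≤ y) (hC : 0 ≤ C) (hxy : x ^ p ≤ C * y ^ q) :
    x ^ p ≤ C ^ (1 / q) * (x * y) := by
  have hroot : x ^ (p - 1) ≤ C ^ (1 / q) * y := calc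
    x ^ (p - 1) = (x ^ p) ^ (1 / q) := by
      rw [← rpow_mul hx, mul_one_div, h.div_conj_eq_sub_one]
    _ ≤ (C * y ^ q) ^ (1 / q) := by gcongr; exact h.symm.one_div_nonneg
    _ = C ^ (1 / q) * y := by
      rw [mul_rpow hC (by positivity), ← rpow_mul hy, mul_one_div_cancel h.symm.ne_zero, rpow_one]
  calc x ^ p = x ^ (p - 1) * x := by rw [← rpow_add_one' hx (by simp [h.ne_zero]), sub_add_cancel]
    _ ≤ C ^ (1 / q) * y * x := by gcongr
    _ = C ^ (1 / q) * (x * y) := by ring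

theorem intervalIntegral_rpow_le_mul_integral_mul (h : p.HolderConjugate q) {f g : ℝ → ℝ}
    {a b C : ℝ} (hab : a ≤ b) (hf : ContinuousOn f (Icc a b)) (hg : ContinuousOn g (Icc a b))
    (hf0 : ∀ x ∈ Icc a b, 0 ≤ f x) (hg0 : ∀ x ∈ Icc a b, 0 ≤ g x) (hC : 0 ≤ C)
    (hfg : ∀ x ∈ Icc a b, f x ^ p ≤ C * g x ^ q) :
    ∫ x in a..b, f x ^ p ≤ C ^ (1 / q) * ∫ x in a..b, f x * g x := by
  have hfp_int : IntervalIntegrable (fun x ↦ f x ^ p) MeasureTheory.volume a b :=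
    (hf.rpow_const fun _ _ ↦ Or.inr h.nonneg).intervalIntegrable_of_Icc hab
  have hfg_int : IntervalIntegrable (fun x ↦ f x * g x) MeasureTheory.volume a b :=
    (hf.mul hg).intervalIntegrable_of_Icc hab
  rw [← integral_const_mul]
  exact integral_mono_on hab hfp_int (hfg_int.const_mul _) fun x hx ↦
    h.rpow_le_mul_of_rpow_le_mul_rpow (hf0 x hx) (hg0 x hx) hC (hfg x hx)

end Real.HolderConjugate

theorem Real.rpow_mul_rpow_le_of_le_mul_s2 {s t A B C D I : ℝ} (hs : 0 ≤ s) (ht : 0 ≤ t)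
    (hst : s + t = 1) (hA : 0 ≤ A) (hB : 0 ≤ B) (hC : 0 ≤ C) (hD : 0 ≤ D) (hI : 0 ≤ I)
    (hAI : A ≤ C * I) (hBI : B ≤ D * I) :
    A ^ s * B ^ t ≤ C ^ s * D ^ t * I := calc
  A ^ s * B ^ t ≤ (C * I) ^ s * (D * I) ^ t := by gcongr
  _ = C ^ s * D ^ t * (I ^ s * I ^ t) := by rw [mul_rpow hC hI, mul_rpow hD hI]; ring
  _ = C ^ s * D ^ t * I := by rw [← rpow_add' hI (by simp [hst]), hst, rpow_one]

theorem reverse_holder (a b p q m M : ℝ) (hab : a < b) (hp : 1 < p)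
    (hpq : 1 / p + 1 / q = 1) (f g : ℝ → ℝ)
    (hfc : ContinuousOn f (Set.Icc a b)) (hgc : ContinuousOn g (Set.Icc a b))
    (hfpos : ∀ x ∈ Set.Icc a b, 0 < f x) (hgpos : ∀ x ∈ Set.Icc a b, 0 < g x)
    (hm : 0 < m)
    (hbound : ∀ x ∈ Set.Icc a b, m ≤ f x ^ p / g x ^ q ∧ f x ^ p / g x ^ q ≤ M) :
    (∫ x in a..b, f x ^ p) ^ (1 / p) * (∫ x in a..b, g x ^ q) ^ (1 / q) ≤
      (M / m) ^ (1 / (p * q)) * ∫ x in a..b, f x * g x := by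
  have hconj : p.HolderConjugate q :=
    holderConjugate_iff.mpr ⟨hp, by simpa only [one_div] using hpq⟩
  have ha : a ∈ Icc a b := left_mem_Icc.mpr hab.le
  have hM : 0 ≤ M := hm.le.trans ((hbound a ha).1.trans (hbound a ha).2)
  have hf0 x hx := (hfpos x hx).le
  have hg0 x hx := (hgpos x hx).le
  have hgq_pos x hx : 0 < g x ^ q := rpow_pos_of_pos (hgpos x hx) q
  have hfp_le := hconj.intervalIntegral_rpow_le_mul_integral_mul hab.le hfc hgc hf0 hg0 hM
    fun x hx ↦ (div_le_iff₀ (hgq_pos x hx)).mp (hbound x hx).2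
  have hgq_le := hconj.symm.intervalIntegral_rpow_le_mul_integral_mul hab.le hgc hfc hg0 hf0
    (inv_nonneg.mpr hm.le) fun x hx ↦
      (le_inv_mul_iff₀ hm).mpr ((le_div_iff₀ (hgq_pos x hx)).mp (hbound x hx).1)
  simp only [mul_comm (g _)] at hgq_le
  calc _ ≤ (M ^ (1 / q)) ^ (1 / p) * ((m⁻¹) ^ (1 / p)) ^ (1 / q) * ∫ x in a..b, f x * g x :=
        rpow_mul_rpow_le_of_le_mul_s2 hconj.one_div_nonneg hconj.symm.one_div_nonneg hpq
          (integral_nonneg hab.le fun x hx ↦ rpow_nonneg (hf0 x hx) p)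
          (integral_nonneg hab.le fun x hx ↦ rpow_nonneg (hg0 x hx) q)
          (by positivity) (by positivity)
          (integral_nonneg hab.le fun x hx ↦ mul_nonneg (hf0 x hx) (hg0 x hx)) hfp_le hgq_le
    _ = (M / m) ^ (1 / (p * q)) * ∫ x in a..b, f x * g x := by
      rw [← rpow_mul hM, ← rpow_mul (inv_nonneg.mpr hm.le), one_div_mul_one_div,
        one_div_mul_one_div, mul_comm q p, ← mul_rpow hM (inv_nonneg.mpr hm.le),
        ← div_eq_mul_inv]
end

section
/- Let f : [a,b] → ℝ be continuous and positive with ∫_a^b f(x) dx ≥ (b-a)^(p-1), where p > 1. Then ∫_a^b f(x)^p dx ≥ (∫_a^b f(x) dx)^(p-1). -/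
/-!
By Jensen's inequality for the convex function `x ↦ x ^ p` (`p ≥ 1`) applied to the average of `f`
over `[a, b]`, `I ^ p ≤ (b - a) ^ (p - 1) * A` with `I = ∫ f` and `A = ∫ f ^ p`. Writing
`I ^ p = I ^ (p - 1) * I` and using the hypothesis `(b - a) ^ (p - 1) ≤ I` to bound the last
factor from below, one can cancel `(b - a) ^ (p - 1)` and obtain `I ^ (p - 1) ≤ A`.
-/

open MeasureTheory Set

theorem MeasureTheory.integral_rpow_le_measureReal_mul_integral_rpow {α : Type*}
    [MeasurableSpace α] {μ : Measure α} [IsFiniteMeasure μ] {f : α → ℝ} {p : ℝ} (hp : 1 ≤ p)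
    (hf_nonneg : 0 ≤ᵐ[μ] f) (hf : Integrable f μ) (hfp : Integrable (fun x ↦ f x ^ p) μ) :
    (∫ x, f x ∂μ) ^ p ≤ μ.real univ ^ (p - 1) * ∫ x, f x ^ p ∂μ := by
  rcases eq_zero_or_neZero μ with rfl | hμ
  · simp [Real.zero_rpow (by linarith : p ≠ 0)]
  have hm : 0 < μ.real univ := measureReal_univ_pos
  have jensen : (⨍ x, f x ∂μ) ^ p ≤ ⨍ x, f x ^ p ∂μ :=
    (convexOn_rpow hp).map_average_le
      (continuousOn_id.rpow_const fun _ _ ↦ Or.inr (by linarith)) isClosed_Ici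
      hf_nonneg hf hfp
  have hI : 0 ≤ ∫ x, f x ∂μ := integral_nonneg_of_ae hf_nonneg
  rw [average_eq, average_eq, smul_eq_mul, smul_eq_mul,
    Real.mul_rpow (inv_nonneg.2 hm.le) hI, Real.inv_rpow hm.le] at jensen
  calc (∫ x, f x ∂μ) ^ p = μ.real univ ^ p * ((μ.real univ ^ p)⁻¹ * (∫ x, f x ∂μ) ^ p) := by
        field_simp
    _ ≤ μ.real univ ^ p * ((μ.real univ)⁻¹ * ∫ x, f x ^ p ∂μ) := by gcongr
    _ = μ.real univ ^ (p - 1) * ∫ x, f x ^ p ∂μ := by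
        rw [Real.rpow_sub_one hm.ne']; field_simp

theorem rpow_sub_one_le_of_le_of_rpow_le_mul {c I A p : ℝ} (hc : 0 < c) (hcI : c ≤ I)
    (h : I ^ p ≤ c * A) : I ^ (p - 1) ≤ A := by
  have hI : 0 < I := hc.trans_le hcI
  refine le_of_mul_le_mul_left ?_ hc
  calc c * I ^ (p - 1) ≤ I * I ^ (p - 1) := by gcongr
    _ = I ^ p := by rw [Real.rpow_sub_one hI.ne']; field_simp
    _ ≤ c * A := h

theorem intervalIntegral.integral_rpow_le_mul_integral_rpow {a b p : ℝ} {f : ℝ → ℝ}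
    (hab : a ≤ b) (hp : 1 ≤ p) (hfc : ContinuousOn f (Icc a b))
    (hf_nonneg : ∀ x ∈ Icc a b, 0 ≤ f x) :
    (∫ x in a..b, f x) ^ p ≤ (b - a) ^ (p - 1) * ∫ x in a..b, f x ^ p := by
  have hfpc : ContinuousOn (fun x ↦ f x ^ p) (Icc a b) :=
    hfc.rpow_const fun _ _ ↦ Or.inr (by linarith)
  have key := integral_rpow_le_measureReal_mul_integral_rpow (μ := volume.restrict (Ioc a b)) hp
    ((ae_restrict_iff' measurableSet_Ioc).2 <|
      .of_forall fun x hx ↦ hf_nonneg x (Ioc_subset_Icc_self hx))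
    (hfc.integrableOn_Icc.mono_set Ioc_subset_Icc_self)
    (hfpc.integrableOn_Icc.mono_set Ioc_subset_Icc_self)
  rwa [measureReal_restrict_apply_univ, Real.volume_real_Ioc_of_le hab,
    ← integral_of_le hab, ← integral_of_le hab] at key

theorem qi_inequality (a b p : ℝ) (hab : a < b) (hp : 1 < p) (f : ℝ → ℝ)
    (hfc : ContinuousOn f (Set.Icc a b))
    (hfpos : ∀ x ∈ Set.Icc a b, 0 < f x)
    (hint : (∫ x in a..b, f x) ≥ (b - a) ^ (p - 1)) :
    (∫ x in a..b, f x ^ p) ≥ (∫ x in a..b, f x) ^ (p - 1) :=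
  rpow_sub_one_le_of_le_of_rpow_le_mul (Real.rpow_pos_of_pos (sub_pos.2 hab) _) hint
    (intervalIntegral.integral_rpow_le_mul_integral_rpow hab.le hp.le hfc fun x hx ↦
      (hfpos x hx).le)
end

section
/- Let f : [a,b] → ℝ be continuously differentiable with f(a) ≥ 0 and f'(x) ≥ 2 for all x ∈ (a,b), and let p ≥ 1. Then ∫_a^b f(x)^(p+2) dx ≥ (1/(b-a)^(p-1)) · (∫_a^b f(x) dx)^(p+1). -/
/-!
Since `f' ≥ 2` and `f a ≥ 0`, the mean value theorem gives `f x ≥ 2 (x - a) ≥ 0` on `[a, b]`, hence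
`I := ∫ f ≥ (b - a)²`. Jensen's inequality for the convex function `t ↦ t ^ (p + 2)` bounds
`∫ f ^ (p + 2)` below by `I ^ (p + 2) / (b - a) ^ (p + 1)`, and trading one factor `I` for
`(b - a)²` gives the claim.
-/

open MeasureTheory Set intervalIntegral
open scoped Interval

theorem mul_sub_le_sub_of_le_hasDerivAt {f f' : ℝ → ℝ} {a b C x : ℝ}
    (hfc : ContinuousOn f (Icc a b)) (hfd : ∀ x ∈ Ioo a b, HasDerivAt f (f' x) x)
    (hf' : ∀ x ∈ Ioo a b, C ≤ f' x) (hx : x ∈ Icc a b) : C * (x - a) ≤ f x - f a := by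
  refine (convex_Icc a b).mul_sub_le_image_sub_of_le_deriv hfc ?_ ?_ a
    (left_mem_Icc.2 (hx.1.trans hx.2)) x hx hx.1
  · rw [interior_Icc]
    exact fun y hy => (hfd y hy).differentiableAt.differentiableWithinAt
  · rw [interior_Icc]
    exact fun y hy => (hfd y hy).deriv ▸ hf' y hy

theorem mul_sq_div_two_le_integral {f : ℝ → ℝ} {a b c : ℝ} (hab : a ≤ b)
    (hfi : IntervalIntegrable f volume a b) (hf : ∀ x ∈ Icc a b, c * (x - a) ≤ f x) :
    c * (b - a) ^ 2 / 2 ≤ ∫ x in a..b, f x := by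
  have hlin : ∫ x in a..b, c * (x - a) = c * (b - a) ^ 2 / 2 := by
    simp only [intervalIntegral.integral_const_mul, integral_comp_sub_right fun x => x, integral_id]
    ring
  rw [← hlin]
  exact integral_mono_on hab (Continuous.intervalIntegrable (by fun_prop) a b) hfi hf

theorem rpow_interval_average_le {g : ℝ → ℝ} {a b q : ℝ} (hab : a < b) (hq : 1 ≤ q)
    (hgc : ContinuousOn g (Icc a b)) (hg : ∀ x ∈ Icc a b, 0 ≤ g x) :
    (⨍ x in a..b, g x) ^ q ≤ ⨍ x in a..b, g x ^ q := by
  have hIoc : Ι a b = Ioc a b := uIoc_of_le hab.le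
  have hgq : ContinuousOn (fun x => g x ^ q) (Icc a b) :=
    hgc.rpow_const fun _ _ => Or.inr (by linarith)
  refine (convexOn_rpow hq).map_set_average_le
    (Real.continuous_rpow_const (by linarith)).continuousOn isClosed_Ici ?_ ?_ ?_ ?_ ?_ <;> rw [hIoc]
  · simpa using hab
  · simp
  · exact (ae_restrict_iff' measurableSet_Ioc).2
      (.of_forall fun x hx => hg x (Ioc_subset_Icc_self hx))
  · exact hgc.integrableOn_Icc.mono_set Ioc_subset_Icc_self
  · exact hgq.integrableOn_Icc.mono_set Ioc_subset_Icc_self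

theorem one_div_rpow_mul_rpow_le {L I p : ℝ} (hL : 0 < L) (hI : L ^ 2 ≤ I) :
    1 / L ^ (p - 1) * I ^ (p + 1) ≤ L * (L⁻¹ * I) ^ (p + 2) := by
  have hI0 : 0 < I := (pow_pos hL 2).trans_le hI
  have hLsplit : L ^ (p + 1) = L ^ (p - 1) * L ^ 2 := by
    rw [← Real.rpow_natCast, ← Real.rpow_add hL]
    congr 1
    push_cast
    ring
  have hrhs : L * (L⁻¹ * I) ^ (p + 2) = I ^ (p + 1) * I / L ^ (p + 1) := by
    rw [Real.mul_rpow (inv_nonneg.2 hL.le) hI0.le, Real.inv_rpow hL.le,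
      show p + 2 = p + 1 + 1 by ring, Real.rpow_add_one hL.ne', Real.rpow_add_one hI0.ne']
    field_simp
  have hLp : 0 < L ^ (p - 1) := Real.rpow_pos_of_pos hL _
  rw [hrhs, hLsplit, le_div_iff₀ (by positivity)]
  calc 1 / L ^ (p - 1) * I ^ (p + 1) * (L ^ (p - 1) * L ^ 2) = I ^ (p + 1) * L ^ 2 := by
        field_simp
    _ ≤ I ^ (p + 1) * I := by gcongr

theorem akkouchi_type_general (a b p : ℝ) (hab : a < b) (hp : 1 ≤ p) (f f' : ℝ → ℝ)
    (hfc : ContinuousOn f (Set.Icc a b))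
    (hfd : ∀ x ∈ Set.Ioo a b, HasDerivAt f (f' x) x)
    (hfa : 0 ≤ f a) (hf' : ∀ x ∈ Set.Ioo a b, 2 ≤ f' x) :
    (∫ x in a..b, f x ^ (p + 2)) ≥
      (1 / (b - a) ^ (p - 1)) * (∫ x in a..b, f x) ^ (p + 1) := by
  have hlin : ∀ x ∈ Icc a b, 2 * (x - a) ≤ f x := fun x hx => by
    linarith [mul_sub_le_sub_of_le_hasDerivAt hfc hfd hf' hx]
  have hnonneg : ∀ x ∈ Icc a b, 0 ≤ f x := fun x hx => by
    linarith [hlin x hx, hx.1]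
  have hI : (b - a) ^ 2 ≤ ∫ x in a..b, f x := by
    simpa using mul_sq_div_two_le_integral hab.le (hfc.intervalIntegrable_of_Icc hab.le) hlin
  have hJensen := rpow_interval_average_le hab (by linarith) hfc hnonneg (q := p + 2)
  rw [interval_average_eq, interval_average_eq, smul_eq_mul, smul_eq_mul] at hJensen
  have hL : 0 < b - a := sub_pos.2 hab
  calc 1 / (b - a) ^ (p - 1) * (∫ x in a..b, f x) ^ (p + 1)
      ≤ (b - a) * ((b - a)⁻¹ * ∫ x in a..b, f x) ^ (p + 2) := one_div_rpow_mul_rpow_le hL hI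
    _ ≤ (b - a) * ((b - a)⁻¹ * ∫ x in a..b, f x ^ (p + 2)) := by gcongr
    _ = ∫ x in a..b, f x ^ (p + 2) := by field_simp

theorem akkouchi_type (a b p : ℝ) (hab : a < b) (hp : 1 ≤ p) (f f' : ℝ → ℝ)
    (hfc : ContinuousOn f (Set.Icc a b))
    (hfd : ∀ x ∈ Set.Ioo a b, HasDerivAt f (f' x) x)
    (hf'c : ContinuousOn f' (Set.Icc a b))
    (hfa : 0 ≤ f a) (hf' : ∀ x ∈ Set.Ioo a b, 2 ≤ f' x) :
    (∫ x in a..b, f x ^ (p + 2)) ≥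
      (1 / (b - a) ^ (p - 1)) * (∫ x in a..b, f x) ^ (p + 1) :=
  akkouchi_type_general a b p hab hp f f' hfc hfd hfa hf'
end

section
/- Let f : [a,b] → ℝ be continuously differentiable with f(a) = 0 and 0 < f'(x) < 1 for all x ∈ (a,b), and let p > 1. Then 2^(1−p) · p · ∫_a^b f(x)^(2p−1) dx < (∫_a^b f(x) dx)^p. -/
/-! Since `0 < f' < 1` and `f a = 0`, the function `f` is positive and `(f² / 2)' = f f' < f`,
so `f x ^ 2 / 2 < I x := ∫ t in a..x, f t`. Hence the derivative of
`x ↦ I x ^ p - 2 ^ (1 - p) * p * ∫ t in a..x, f t ^ (2 * p - 1)`, namely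
`p f (I ^ (p - 1) - (f² / 2) ^ (p - 1))`, is positive; this function vanishes at `a`, so it is
positive at `b`. -/

open Set intervalIntegral MeasureTheory

section Calculus

variable {a b : ℝ}

lemma strictMonoOn_Icc_of_hasDerivAt_pos {F F' : ℝ → ℝ} (hF : ContinuousOn F (Icc a b))
    (hF' : ∀ x ∈ Ioo a b, HasDerivAt F (F' x) x) (hpos : ∀ x ∈ Ioo a b, 0 < F' x) :
    StrictMonoOn F (Icc a b) :=
  strictMonoOn_of_deriv_pos (convex_Icc a b) hF fun x hx ↦ by
    rw [interior_Icc] at hx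
    rw [(hF' x hx).deriv]
    exact hpos x hx

lemma continuousOn_primitive_of_continuousOn {g : ℝ → ℝ} (hab : a ≤ b)
    (hg : ContinuousOn g (Icc a b)) : ContinuousOn (fun x ↦ ∫ t in a..x, g t) (Icc a b) := by
  rw [← uIcc_of_le hab] at hg ⊢
  exact continuousOn_primitive_interval hg.integrableOn_Icc

lemma hasDerivAt_primitive_of_continuousOn {g : ℝ → ℝ} (hg : ContinuousOn g (Icc a b))
    {x : ℝ} (hx : x ∈ Ioo a b) : HasDerivAt (fun y ↦ ∫ t in a..y, g t) (g x) x :=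
  have hgx : ContinuousAt g x := hg.continuousAt (Icc_mem_nhds hx.1 hx.2)
  integral_hasDerivAt_right
    ((hg.mono (Icc_subset_Icc_right hx.2.le)).intervalIntegrable_of_Icc hx.1.le)
    ((hg.mono Ioo_subset_Icc_self).stronglyMeasurableAtFilter isOpen_Ioo x hx) hgx

end Calculus

lemma rpow_sq_div_two_mul_self {y : ℝ} (hy : 0 < y) (p : ℝ) :
    (y ^ 2 / 2) ^ (p - 1) * y = 2 ^ (1 - p) * y ^ (2 * p - 1) := by
  have hsq : (y ^ 2) ^ (p - 1) * y = y ^ (2 * p - 1) := by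
    rw [← Real.rpow_natCast y 2, ← Real.rpow_mul hy.le, ← Real.rpow_add_one hy.ne']
    congr 1
    push_cast
    ring
  rw [Real.div_rpow (by positivity) zero_le_two, div_mul_eq_mul_div, hsq,
    show (1 : ℝ) - p = -(p - 1) by ring, Real.rpow_neg zero_le_two]
  ring

lemma two_rpow_mul_rpow_lt {y I p : ℝ} (hy : 0 < y) (hI : y ^ 2 / 2 < I) (hp : 1 < p) :
    2 ^ (1 - p) * p * y ^ (2 * p - 1) < y * p * I ^ (p - 1) := by
  have hlt : (y ^ 2 / 2) ^ (p - 1) * y < I ^ (p - 1) * y :=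
    mul_lt_mul_of_pos_right (Real.rpow_lt_rpow (by positivity) hI (by linarith)) hy
  rw [rpow_sq_div_two_mul_self hy] at hlt
  nlinarith

section Qi

variable {a b : ℝ} {f f' : ℝ → ℝ}

lemma pos_of_hasDerivAt_pos (hab : a ≤ b) (hfc : ContinuousOn f (Icc a b))
    (hfd : ∀ x ∈ Ioo a b, HasDerivAt f (f' x) x) (hf'pos : ∀ x ∈ Ioo a b, 0 < f' x)
    (hfa : f a = 0) {x : ℝ} (hx : x ∈ Ioc a b) : 0 < f x :=
  hfa ▸ strictMonoOn_Icc_of_hasDerivAt_pos hfc hfd hf'pos (left_mem_Icc.2 hab)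
    (Ioc_subset_Icc_self hx) hx.1

lemma sq_div_two_lt_integral (hab : a ≤ b) (hfc : ContinuousOn f (Icc a b))
    (hfd : ∀ x ∈ Ioo a b, HasDerivAt f (f' x) x) (hfpos : ∀ x ∈ Ioo a b, 0 < f x)
    (hf'lt : ∀ x ∈ Ioo a b, f' x < 1) (hfa : f a = 0) {x : ℝ} (hx : x ∈ Ioc a b) :
    f x ^ 2 / 2 < ∫ t in a..x, f t := by
  have hmono : StrictMonoOn (fun y ↦ (∫ t in a..y, f t) - f y ^ 2 / 2) (Icc a b) := by
    refine strictMonoOn_Icc_of_hasDerivAt_pos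
      ((continuousOn_primitive_of_continuousOn hab hfc).sub ((hfc.pow 2).div_const 2))
      (fun y hy ↦ (hasDerivAt_primitive_of_continuousOn hfc hy).sub
        (((hfd y hy).pow 2).div_const 2)) fun y hy ↦ ?_
    have hderiv := mul_pos (hfpos y hy) (sub_pos.2 (hf'lt y hy))
    simp only [Nat.cast_ofNat]
    linarith
  have hax := hmono (left_mem_Icc.2 hab) (Ioc_subset_Icc_self hx) hx.1
  simp only [integral_same, hfa] at hax
  linarith

end Qi

theorem qi_strict_inequality_general (a b p : ℝ) (hab : a < b) (hp : 1 < p) (f f' : ℝ → ℝ)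
    (hfc : ContinuousOn f (Set.Icc a b))
    (hfd : ∀ x ∈ Set.Ioo a b, HasDerivAt f (f' x) x)
    (hfa : f a = 0) (hf' : ∀ x ∈ Set.Ioo a b, 0 < f' x ∧ f' x < 1) :
    2 ^ (1 - p) * p * (∫ x in a..b, f x ^ (2 * p - 1)) <
      (∫ x in a..b, f x) ^ p := by
  have hfpos : ∀ x ∈ Ioo a b, 0 < f x := fun x hx ↦
    pos_of_hasDerivAt_pos hab.le hfc hfd (fun y hy ↦ (hf' y hy).1) hfa (Ioo_subset_Ioc_self hx)
  have hkey : ∀ x ∈ Ioo a b, f x ^ 2 / 2 < ∫ t in a..x, f t := fun x hx ↦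
    sq_div_two_lt_integral hab.le hfc hfd hfpos (fun y hy ↦ (hf' y hy).2) hfa
      (Ioo_subset_Ioc_self hx)
  have hg : ContinuousOn (fun t ↦ f t ^ (2 * p - 1)) (Icc a b) :=
    hfc.rpow_const fun _ _ ↦ Or.inr (by linarith)
  have hF : StrictMonoOn (fun x ↦ (∫ t in a..x, f t) ^ p -
      2 ^ (1 - p) * p * ∫ t in a..x, f t ^ (2 * p - 1)) (Icc a b) :=
    strictMonoOn_Icc_of_hasDerivAt_pos
      (((continuousOn_primitive_of_continuousOn hab.le hfc).rpow_const
        fun _ _ ↦ Or.inr (by linarith)).sub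
        (continuousOn_const.mul (continuousOn_primitive_of_continuousOn hab.le hg)))
      (fun x hx ↦ ((hasDerivAt_primitive_of_continuousOn hfc hx).rpow_const (Or.inr hp.le)).sub
        ((hasDerivAt_primitive_of_continuousOn hg hx).const_mul _))
      fun x hx ↦ sub_pos.2 (two_rpow_mul_rpow_lt (hfpos x hx) (hkey x hx) hp)
  have hFab := hF (left_mem_Icc.2 hab.le) (right_mem_Icc.2 hab.le) hab
  simp only [integral_same, Real.zero_rpow (by linarith : p ≠ 0), mul_zero, sub_zero] at hFab
  linarith

theorem qi_strict_inequality (a b p : ℝ) (hab : a < b) (hp : 1 < p) (f f' : ℝ → ℝ)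
    (hfc : ContinuousOn f (Set.Icc a b))
    (hfd : ∀ x ∈ Set.Ioo a b, HasDerivAt f (f' x) x)
    (hf'c : ContinuousOn f' (Set.Icc a b))
    (hfa : f a = 0) (hf' : ∀ x ∈ Set.Ioo a b, 0 < f' x ∧ f' x < 1) :
    2 ^ (1 - p) * p * (∫ x in a..b, f x ^ (2 * p - 1)) <
      (∫ x in a..b, f x) ^ p :=
  qi_strict_inequality_general a b p hab hp f f' hfc hfd hfa hf'
end

section
/- Let f : [a,b] → ℝ be continuously differentiable with f(a) = 0 and 0 < f'(x) < 1 for all x ∈ (a,b). Then for every x ∈ (a,b], ∫_a^x f(t) dt > f(x)^2 / 2. -/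
/-!
Put `G x = ∫_a^x f - f(x)²/2`. Then `G a = 0` and `G' = f (1 - f')`. Since `f(a) = 0` and `f' > 0`,
`f` is positive on `(a, b)`, so `G' > 0` there and `G` is positive on `(a, b]`.
-/

open Set

theorem pos_of_hasDerivAt_pos_of_eq_zero {a b : ℝ} {g g' : ℝ → ℝ}
    (hgc : ContinuousOn g (Icc a b)) (hgd : ∀ x ∈ Ioo a b, HasDerivAt g (g' x) x)
    (hg' : ∀ x ∈ Ioo a b, 0 < g' x) (hga : g a = 0) : ∀ x ∈ Ioc a b, 0 < g x := by
  intro x hx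
  have hmono : StrictMonoOn g (Icc a b) :=
    strictMonoOn_of_hasDerivWithinAt_pos (convex_Icc a b) hgc
      (fun y hy ↦ by rw [interior_Icc] at hy ⊢; exact (hgd y hy).hasDerivWithinAt)
      (fun y hy ↦ by rw [interior_Icc] at hy; exact hg' y hy)
  simpa [hga] using hmono (left_mem_Icc.2 (hx.1.trans_le hx.2).le) (Ioc_subset_Icc_self hx) hx.1

theorem continuousOn_intervalIntegral_sub_sq_div_two {a b : ℝ} {f : ℝ → ℝ} (hab : a ≤ b)
    (hfc : ContinuousOn f (Icc a b)) :
    ContinuousOn (fun x ↦ (∫ t in a..x, f t) - f x ^ 2 / 2) (Icc a b) := by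
  refine ContinuousOn.sub ?_ ((hfc.pow 2).div_const 2)
  rw [← uIcc_of_le hab] at hfc ⊢
  exact intervalIntegral.continuousOn_primitive_interval (hfc.integrableOn_compact isCompact_uIcc)

theorem hasDerivAt_intervalIntegral_sub_sq_div_two {a b x f' : ℝ} {f : ℝ → ℝ}
    (hfc : ContinuousOn f (Icc a b)) (hx : x ∈ Ioo a b) (hfd : HasDerivAt f f' x) :
    HasDerivAt (fun y ↦ (∫ t in a..y, f t) - f y ^ 2 / 2) (f x * (1 - f')) x := by
  have hprim : HasDerivAt (fun y ↦ ∫ t in a..y, f t) (f x) x := by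
    refine intervalIntegral.integral_hasDerivAt_right ?_
      ((hfc.mono Ioo_subset_Icc_self).stronglyMeasurableAtFilter isOpen_Ioo x hx)
      hfd.continuousAt
    refine (hfc.mono ?_).intervalIntegrable
    rw [uIcc_of_le hx.1.le]
    exact Icc_subset_Icc_right hx.2.le
  have hsq : HasDerivAt (fun y ↦ f y ^ 2 / 2) (f x * f') x :=
    ((hfd.fun_pow 2).div_const 2).congr_deriv (by push_cast; ring)
  exact (hprim.sub hsq).congr_deriv (by ring)

theorem key_lemma_square_general (a b : ℝ) (f f' : ℝ → ℝ)
    (hfc : ContinuousOn f (Set.Icc a b))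
    (hfd : ∀ x ∈ Set.Ioo a b, HasDerivAt f (f' x) x)
    (hfa : f a = 0) (hf' : ∀ x ∈ Set.Ioo a b, 0 < f' x ∧ f' x < 1) :
    ∀ x ∈ Set.Ioc a b, (∫ t in a..x, f t) > f x ^ 2 / 2 := by
  intro x hx
  have hf_pos : ∀ y ∈ Ioo a b, 0 < f y := fun y hy ↦
    pos_of_hasDerivAt_pos_of_eq_zero hfc hfd (fun z hz ↦ (hf' z hz).1) hfa y
      (Ioo_subset_Ioc_self hy)
  have hG_pos := pos_of_hasDerivAt_pos_of_eq_zero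
    (continuousOn_intervalIntegral_sub_sq_div_two (hx.1.trans_le hx.2).le hfc)
    (fun y hy ↦ hasDerivAt_intervalIntegral_sub_sq_div_two hfc hy (hfd y hy))
    (fun y hy ↦ mul_pos (hf_pos y hy) (sub_pos.2 (hf' y hy).2)) (by simp [hfa]) x hx
  linarith

theorem key_lemma_square (a b : ℝ) (hab : a < b) (f f' : ℝ → ℝ)
    (hfc : ContinuousOn f (Set.Icc a b))
    (hfd : ∀ x ∈ Set.Ioo a b, HasDerivAt f (f' x) x)
    (hf'c : ContinuousOn f' (Set.Icc a b))
    (hfa : f a = 0) (hf' : ∀ x ∈ Set.Ioo a b, 0 < f' x ∧ f' x < 1) :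
    ∀ x ∈ Set.Ioc a b, (∫ t in a..x, f t) > f x ^ 2 / 2 :=
  key_lemma_square_general a b f f' hfc hfd hfa hf'
end

section
/- Let f : [a,b] → ℝ be continuous and positive with ∫_a^b f(x) dx ≥ (b-a)^(p-1), where p < 0. Then ∫_a^b f(x)^p dx ≥ (∫_a^b f(x) dx)^(p-1). -/
/-!
Jensen's inequality for the convex function `x ↦ x ^ p` (`p ≤ 0`) gives `L * (I / L) ^ p ≤ J`,
where `L = b - a`, `I = ∫ f` and `J = ∫ f ^ p`; the hypothesis `L ^ (p - 1) ≤ I` gives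
`I ^ (p - 1) = I ^ p / I ≤ I ^ p / L ^ (p - 1) = L * (I / L) ^ p`.
-/

open MeasureTheory Set

theorem convexOn_rpow_of_nonpos {p : ℝ} (hp : p ≤ 0) :
    ConvexOn ℝ (Ioi 0) fun x : ℝ ↦ x ^ p := by
  refine MonotoneOn.convexOn_of_deriv (convex_Ioi 0) ?_ ?_ ?_
  · exact fun x hx ↦ (Real.continuousAt_rpow_const x p (.inl hx.ne')).continuousWithinAt
  · rw [interior_Ioi]
    exact fun x hx ↦ (Real.differentiableAt_rpow_const_of_ne p hx.ne').differentiableWithinAt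
  · rw [interior_Ioi]
    intro x hx y _ hxy
    simp only [Real.deriv_rpow_const]
    exact mul_le_mul_of_nonpos_left (Real.rpow_le_rpow_of_nonpos hx hxy (by linarith)) hp

theorem ConvexOn.map_interval_average_le {f g : ℝ → ℝ} {s : Set ℝ} {a b : ℝ} (hab : a < b)
    (hg : ConvexOn ℝ s g) (hgc : ContinuousOn g s) (hf : ContinuousOn f (Icc a b))
    (hfs : MapsTo f (Icc a b) s) : g (⨍ x in a..b, f x) ≤ ⨍ x in a..b, g (f x) := by
  have hK : IsCompact (f '' Icc a b) := isCompact_Icc.image_of_continuousOn hf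
  have hKs : f '' Icc a b ⊆ s := hfs.image_subset
  have hKconv : Convex ℝ (f '' Icc a b) := (isPreconnected_Icc.image f hf).convex
  have hgf : ContinuousOn (g ∘ f) (Icc a b) := (hgc.mono hKs).comp hf (mapsTo_image f _)
  rw [uIoc_of_le hab.le]
  refine (hg.subset hKs hKconv).map_set_average_le (hgc.mono hKs) hK.isClosed ?_ ?_ ?_
    (hf.integrableOn_Icc.mono_set Ioc_subset_Icc_self)
    (hgf.integrableOn_Icc.mono_set Ioc_subset_Icc_self)
  · simp [hab]
  · simp
  · exact (ae_restrict_iff' measurableSet_Ioc).2 <| .of_forall fun x hx ↦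
      mem_image_of_mem f (Ioc_subset_Icc_self hx)

theorem rpow_sub_one_le_mul_div_rpow {I L p : ℝ} (hL : 0 < L) (hI : L ^ (p - 1) ≤ I) :
    I ^ (p - 1) ≤ L * (I / L) ^ p := by
  have hI0 : 0 < I := (Real.rpow_pos_of_pos hL _).trans_le hI
  calc I ^ (p - 1) = I ^ p / I := Real.rpow_sub_one hI0.ne' p
    _ ≤ I ^ p / L ^ (p - 1) := by gcongr
    _ = L * (I / L) ^ p := by
      rw [Real.div_rpow hI0.le hL.le, Real.rpow_sub_one hL.ne']
      field_simp

theorem qi_inequality_neg (a b p : ℝ) (hab : a < b) (hp : p < 0) (f : ℝ → ℝ)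
    (hfc : ContinuousOn f (Set.Icc a b))
    (hfpos : ∀ x ∈ Set.Icc a b, 0 < f x)
    (hint : (∫ x in a..b, f x) ≥ (b - a) ^ (p - 1)) :
    (∫ x in a..b, f x ^ p) ≥ (∫ x in a..b, f x) ^ (p - 1) := by
  have hL : 0 < b - a := sub_pos.2 hab
  have hjensen := (convexOn_rpow_of_nonpos hp.le).map_interval_average_le hab
    (fun x hx ↦ (Real.continuousAt_rpow_const x p (.inl (ne_of_gt hx))).continuousWithinAt)
    hfc hfpos
  rw [interval_average_eq_div, interval_average_eq_div, le_div_iff₀ hL, mul_comm] at hjensen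
  exact (rpow_sub_one_le_mul_div_rpow hL hint).trans hjensen
end

section
/- Let f, g : [a,b] → ℝ be continuous and positive, and let p < 0 with 1/p + 1/q = 1. Then ∫_a^b f(x)^p / g(x)^(p/q) dx ≥ (∫_a^b f(x) dx)^p / (∫_a^b g(x) dx)^(p/q). -/
/-! Since `p / q = p - 1`, the claim reads `(∫ f) ^ p (∫ g) ^ (1 - p) ≤ ∫ f ^ p g ^ (1 - p)`.
With `r = 1 - p > 1` and `s` its conjugate exponent, split
`g = (f ^ ((1 - r) / r) g) · f ^ (1 / s)`; Hölder's inequality then gives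
`(∫ g) ^ r ≤ (∫ f ^ (1 - r) g ^ r) (∫ f) ^ (r - 1)`, and multiplying by
`(∫ f) ^ p = (∫ f) ^ (1 - r)` finishes. -/

open MeasureTheory Set

namespace MeasureTheory

variable {α : Type*} [MeasurableSpace α] {μ : Measure α} {f g : α → ℝ}

lemma memLp_ofReal_of_integrable_rpow {r : ℝ} (hr : 0 < r) (hf_nonneg : 0 ≤ᵐ[μ] f)
    (hf : AEStronglyMeasurable f μ) (hfr : Integrable (fun x ↦ f x ^ r) μ) :
    MemLp f (ENNReal.ofReal r) μ := by
  rw [← integrable_norm_rpow_iff hf (by simpa using hr) ENNReal.ofReal_ne_top,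
    ENNReal.toReal_ofReal hr.le]
  refine hfr.congr ?_
  filter_upwards [hf_nonneg] with x hx
  rw [Real.norm_of_nonneg hx]

theorem rpow_integral_le_integral_mul_rpow_integral {r : ℝ} (hr : 1 < r)
    (hf_pos : ∀ᵐ x ∂μ, 0 < f x) (hg_nonneg : 0 ≤ᵐ[μ] g) (hf : Integrable f μ)
    (hg : AEStronglyMeasurable g μ) (hfg : Integrable (fun x ↦ f x ^ (1 - r) * g x ^ r) μ) :
    (∫ x, g x ∂μ) ^ r ≤ (∫ x, f x ^ (1 - r) * g x ^ r ∂μ) * (∫ x, f x ∂μ) ^ (r - 1) := by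
  have hr0 : 0 < r := by linarith
  set s := r.conjExponent
  have hrs : r.HolderConjugate s := .conjExponent hr
  have hs0 : 0 < s := hrs.symm.pos
  have hs_inv : 1 / s = (r - 1) / r := by
    rw [show s = r / (r - 1) from rfl, one_div_div]
  set u := fun x ↦ f x ^ ((1 - r) / r) * g x
  set v := fun x ↦ f x ^ (1 / s)
  have hu_nonneg : 0 ≤ᵐ[μ] u := by
    filter_upwards [hf_pos, hg_nonneg] with x hfx hgx
    exact mul_nonneg (Real.rpow_nonneg hfx.le _) hgx
  have hv_nonneg : 0 ≤ᵐ[μ] v := by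
    filter_upwards [hf_pos] with x hfx
    exact Real.rpow_nonneg hfx.le _
  have hu_pow : (fun x ↦ u x ^ r) =ᵐ[μ] fun x ↦ f x ^ (1 - r) * g x ^ r := by
    filter_upwards [hf_pos, hg_nonneg] with x hfx hgx
    rw [Real.mul_rpow (Real.rpow_nonneg hfx.le _) hgx, ← Real.rpow_mul hfx.le,
      div_mul_cancel₀ _ hr0.ne']
  have hv_pow : (fun x ↦ v x ^ s) =ᵐ[μ] f := by
    filter_upwards [hf_pos] with x hfx
    rw [← Real.rpow_mul hfx.le, one_div_mul_cancel hs0.ne', Real.rpow_one]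
  have huv : (fun x ↦ u x * v x) =ᵐ[μ] g := by
    filter_upwards [hf_pos] with x hfx
    rw [mul_right_comm, ← Real.rpow_add hfx, hs_inv, ← add_div, sub_add_sub_cancel', sub_self,
      zero_div, Real.rpow_zero, one_mul]
  have hf_meas := hf.aestronglyMeasurable.aemeasurable
  have hu : MemLp u (ENNReal.ofReal r) μ :=
    memLp_ofReal_of_integrable_rpow hr0 hu_nonneg
      ((hf_meas.pow_const _).aestronglyMeasurable.mul hg) ((integrable_congr hu_pow).2 hfg)
  have hv : MemLp v (ENNReal.ofReal s) μ :=
    memLp_ofReal_of_integrable_rpow hs0 hv_nonneg (hf_meas.pow_const _).aestronglyMeasurable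
      ((integrable_congr hv_pow).2 hf)
  have holder := integral_mul_le_Lp_mul_Lq_of_nonneg hrs hu_nonneg hv_nonneg hu hv
  rw [integral_congr_ae huv, integral_congr_ae hu_pow, integral_congr_ae hv_pow] at holder
  calc (∫ x, g x ∂μ) ^ r
      ≤ ((∫ x, f x ^ (1 - r) * g x ^ r ∂μ) ^ (1 / r) * (∫ x, f x ∂μ) ^ (1 / s)) ^ r := by
        gcongr
        exact integral_nonneg_of_ae hg_nonneg
    _ = (∫ x, f x ^ (1 - r) * g x ^ r ∂μ) * (∫ x, f x ∂μ) ^ (r - 1) := by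
        have hH : 0 ≤ ∫ x, f x ^ (1 - r) * g x ^ r ∂μ := integral_nonneg_of_ae <| by
          filter_upwards [hf_pos, hg_nonneg] with x hfx hgx
          exact mul_nonneg (Real.rpow_nonneg hfx.le _) (Real.rpow_nonneg hgx _)
        have hF : 0 ≤ ∫ x, f x ∂μ := integral_nonneg_of_ae (hf_pos.mono fun x hx ↦ hx.le)
        rw [Real.mul_rpow (Real.rpow_nonneg hH _) (Real.rpow_nonneg hF _), ← Real.rpow_mul hH,
          ← Real.rpow_mul hF, one_div_mul_cancel hr0.ne', Real.rpow_one, hs_inv,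
          div_mul_cancel₀ _ hr0.ne']

theorem rpow_integral_mul_rpow_integral_le_integral {p : ℝ} (hp : p < 0)
    (hf_pos : ∀ᵐ x ∂μ, 0 < f x) (hg_nonneg : 0 ≤ᵐ[μ] g) (hf : Integrable f μ)
    (hg : AEStronglyMeasurable g μ) (hfg : Integrable (fun x ↦ f x ^ p * g x ^ (1 - p)) μ) :
    (∫ x, f x ∂μ) ^ p * (∫ x, g x ∂μ) ^ (1 - p) ≤ ∫ x, f x ^ p * g x ^ (1 - p) ∂μ := by
  have key := rpow_integral_le_integral_mul_rpow_integral (r := 1 - p) (by linarith)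
    hf_pos hg_nonneg hf hg (by rwa [sub_sub_cancel])
  rw [sub_sub_cancel, sub_sub_cancel_left] at key
  rcases (integral_nonneg_of_ae (hf_pos.mono fun x hx ↦ hx.le)).eq_or_lt with hF | hF
  · rw [← hF, Real.zero_rpow hp.ne, zero_mul]
    refine integral_nonneg_of_ae ?_
    filter_upwards [hf_pos, hg_nonneg] with x hfx hgx
    exact mul_nonneg (Real.rpow_nonneg hfx.le _) (Real.rpow_nonneg hgx _)
  · set F := ∫ x, f x ∂μ
    calc F ^ p * (∫ x, g x ∂μ) ^ (1 - p)
        ≤ F ^ p * ((∫ x, f x ^ p * g x ^ (1 - p) ∂μ) * F ^ (-p)) := by gcongr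
      _ = ∫ x, f x ^ p * g x ^ (1 - p) ∂μ := by
          rw [Real.rpow_neg hF.le, mul_left_comm, mul_inv_cancel₀ (Real.rpow_pos_of_pos hF p).ne',
            mul_one]

end MeasureTheory

lemma div_rpow_sub_one_eq_mul_rpow_one_sub {x : ℝ} (hx : 0 ≤ x) (y p : ℝ) :
    y / x ^ (p - 1) = y * x ^ (1 - p) := by
  rw [div_eq_mul_inv, ← Real.rpow_neg hx, neg_sub]

theorem holder_consequence_neg (a b p q : ℝ) (hab : a < b) (hp : p < 0)
    (hpq : 1 / p + 1 / q = 1) (f g : ℝ → ℝ)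
    (hfc : ContinuousOn f (Set.Icc a b)) (hgc : ContinuousOn g (Set.Icc a b))
    (hfpos : ∀ x ∈ Set.Icc a b, 0 < f x) (hgpos : ∀ x ∈ Set.Icc a b, 0 < g x) :
    (∫ x in a..b, f x ^ p / g x ^ (p / q)) ≥
      (∫ x in a..b, f x) ^ p / (∫ x in a..b, g x) ^ (p / q) := by
  have hpq' : p / q = p - 1 := by
    rw [div_eq_mul_one_div, show 1 / q = 1 - 1 / p by linarith, mul_sub, mul_one,
      mul_one_div_cancel hp.ne]
  have hIoc : Ioc a b ⊆ Icc a b := Ioc_subset_Icc_self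
  have hg_nonneg : ∀ x ∈ Ioc a b, 0 ≤ g x := fun x hx ↦ (hgpos x (hIoc hx)).le
  have hfg : ContinuousOn (fun x ↦ f x ^ p * g x ^ (1 - p)) (Icc a b) :=
    (hfc.rpow_const fun x hx ↦ .inl (hfpos x hx).ne').mul
      (hgc.rpow_const fun x hx ↦ .inl (hgpos x hx).ne')
  have key := rpow_integral_mul_rpow_integral_le_integral (μ := volume.restrict (Ioc a b)) hp
    (ae_restrict_of_forall_mem measurableSet_Ioc fun x hx ↦ hfpos x (hIoc hx))
    (ae_restrict_of_forall_mem measurableSet_Ioc hg_nonneg)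
    (hfc.integrableOn_Icc.mono_set hIoc) (hgc.integrableOn_Icc.mono_set hIoc).aestronglyMeasurable
    (hfg.integrableOn_Icc.mono_set hIoc)
  simp only [ge_iff_le, hpq', intervalIntegral.integral_of_le hab.le]
  rw [div_rpow_sub_one_eq_mul_rpow_one_sub (setIntegral_nonneg measurableSet_Ioc hg_nonneg),
    setIntegral_congr_fun measurableSet_Ioc fun x hx ↦
      div_rpow_sub_one_eq_mul_rpow_one_sub (hg_nonneg x hx) _ _]
  exact key
end

section
/- Let h > 0 be the step of the lattice time scale hℤ, let p ≥ 2, and let f be defined on the finite arithmetic grid {a, a+h, ..., b} with f(a) ≥ h and forward difference quotient (f(x+h) − f(x))/h ≥ 2 for all grid points x in [a, b−h]. Then h·Σ_{x ∈ grid, x < b} f(x)^(p+2) ≥ (1/(b−a)^(p−1)) · (h·Σ_{x ∈ grid, x < b} f(x))^(p+1). -/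
theorem discrete_akkouchi (a h p : ℝ) (hh : 0 < h) (hp : 2 ≤ p) (n : ℕ) (hn : 0 < n)
    (f : ℝ → ℝ) (hfa : h ≤ f a)
    (hdiff : ∀ i < n, (f (a + (i + 1) * h) - f (a + i * h)) / h ≥ 2) :
    h * ∑ i ∈ Finset.range n, f (a + i * h) ^ (p + 2) ≥
      (1 / (n * h) ^ (p - 1)) *
        (h * ∑ i ∈ Finset.range n, f (a + i * h)) ^ (p + 1) := by
  set x : ℕ → ℝ := fun i => f (a + i * h) with hx
  have key : ∀ i, i < n → (2 * (i : ℝ) + 1) * h ≤ x i := by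
    intro i
    induction i with
    | zero =>
      intro _
      simpa [hx] using hfa
    | succ i ih =>
      intro hi1
      have hi : i < n := Nat.lt_of_succ_lt hi1
      have h1 := hdiff i hi
      have h2 : 2 * h ≤ f (a + (i + 1) * h) - f (a + i * h) := by
        rw [ge_iff_le, le_div_iff₀ hh] at h1
        linarith
      have h3 : x (i + 1) = f (a + ((i : ℝ) + 1) * h) := by
        simp only [hx]; push_cast; ring_nf
      have := ih hi
      rw [h3]
      push_cast
      simp only [hx] at this
      linarith
  have hN : (0 : ℝ) < n := by exact_mod_cast hn
  have hNne : (n : ℝ) ≠ 0 := ne_of_gt hN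
  have hxpos : ∀ i, i < n → 0 < x i := by
    intro i hi
    have := key i hi
    have : (0:ℝ) < (2 * (i:ℝ) + 1) * h := by positivity
    linarith [key i hi]
  set S1 := ∑ i ∈ Finset.range n, x i with hS1
  set S2 := ∑ i ∈ Finset.range n, x i ^ (p + 2) with hS2
  -- lower bound on S1
  have hsum : ∀ m : ℕ, ∑ i ∈ Finset.range m, (2 * (i : ℝ) + 1) * h = (m : ℝ)^2 * h := by
    intro m
    induction m with
    | zero => simp
    | succ m ih =>
      rw [Finset.sum_range_succ, ih]
      push_cast; ring
  have hS1lb : (n : ℝ)^2 * h ≤ S1 := by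
    rw [← hsum n]
    exact Finset.sum_le_sum fun i hi => key i (Finset.mem_range.mp hi)
  have hS1pos : 0 < S1 := lt_of_lt_of_le (by positivity) hS1lb
  -- Jensen
  have hjensen : ((n : ℝ)⁻¹ * S1) ^ (p + 2) ≤ (n : ℝ)⁻¹ * S2 := by
    have := Real.rpow_arith_mean_le_arith_mean_rpow (Finset.range n)
      (fun _ => (n : ℝ)⁻¹) x (fun i _ => by positivity)
      (by rw [Finset.sum_const, Finset.card_range, nsmul_eq_mul, mul_inv_cancel₀ hNne])
      (fun i hi => (hxpos i (Finset.mem_range.mp hi)).le)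
      (p := p + 2) (by linarith)
    simpa [← Finset.mul_sum, hS1, hS2] using this
  have hS2pos : 0 < S2 := by
    have h0 : (0:ℝ) < ((n : ℝ)⁻¹ * S1) ^ (p + 2) := by positivity
    have := lt_of_lt_of_le h0 hjensen
    nlinarith [this, inv_pos.mpr hN]
  -- S1 ^ (p+2) ≤ n ^ (p+1) * S2
  have hmain : S1 ^ (p + 2) ≤ (n : ℝ) ^ (p + 1) * S2 := by
    have h1 : S1 ^ (p + 2) = (n : ℝ) ^ (p + 2) * ((n : ℝ)⁻¹ * S1) ^ (p + 2) := by
      rw [← Real.mul_rpow (by positivity) (by positivity)]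
      congr 1
      field_simp
    have h2 : (n : ℝ) ^ (p + 2) * ((n : ℝ)⁻¹ * S1) ^ (p + 2) ≤
        (n : ℝ) ^ (p + 2) * ((n : ℝ)⁻¹ * S2) := by
      apply mul_le_mul_of_nonneg_left hjensen (by positivity)
    have h3 : (n : ℝ) ^ (p + 2) * ((n : ℝ)⁻¹ * S2) = (n : ℝ) ^ (p + 1) * S2 := by
      have : (n : ℝ) ^ (p + 2) = (n : ℝ) ^ (p + 1) * (n : ℝ) := by
        rw [← Real.rpow_add_one hNne]; ring_nf
      rw [this]; field_simp
    linarith [h1 ▸ le_trans h2 (le_of_eq h3)]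
  -- final algebra
  rw [ge_iff_le, one_div, inv_mul_le_iff₀ (by positivity)]
  have hexp1 : ((n : ℝ) * h) ^ (p - 1) = (n : ℝ) ^ (p - 1) * h ^ (p - 1) :=
    Real.mul_rpow hN.le hh.le
  have hexp2 : (h * S1) ^ (p + 1) = h ^ (p + 1) * S1 ^ (p + 1) :=
    Real.mul_rpow hh.le hS1pos.le
  rw [hexp1, hexp2]
  -- reduce using: S1^(p+1) * S1 = S1^(p+2), n^(p+1) = n^(p-1) * n^2, h^(p+1) = h^(p-1)*h^2
  have e1 : S1 ^ (p + 1) * S1 = S1 ^ (p + 2) := by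
    rw [← Real.rpow_add_one (ne_of_gt hS1pos)]; ring_nf
  have e2 : (n : ℝ) ^ (p + 1) = (n : ℝ) ^ (p - 1) * (n : ℝ) ^ 2 := by
    rw [← Real.rpow_natCast (n : ℝ) 2, ← Real.rpow_add hN]
    norm_num
    congr 1
    ring
  have e3 : h ^ (p + 1) = h ^ (p - 1) * h ^ 2 := by
    rw [← Real.rpow_natCast h 2, ← Real.rpow_add hh]
    norm_num
    congr 1
    ring
  -- key inequality: S1^(p+1) * (n^2 * h) ≤ n^(p+1) * S2
  have f1 : S1 ^ (p + 1) * ((n : ℝ)^2 * h) ≤ (n : ℝ) ^ (p + 1) * S2 := by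
    calc S1 ^ (p + 1) * ((n : ℝ)^2 * h) ≤ S1 ^ (p + 1) * S1 := by
          apply mul_le_mul_of_nonneg_left hS1lb (Real.rpow_nonneg hS1pos.le _)
      _ = S1 ^ (p + 2) := e1
      _ ≤ (n : ℝ) ^ (p + 1) * S2 := hmain
  rw [e2] at f1
  rw [e3]
  have hp1 : 0 ≤ h ^ (p - 1) := Real.rpow_nonneg hh.le _
  have hn1 : 0 ≤ (n : ℝ) ^ (p - 1) := Real.rpow_nonneg hN.le _
  have hn2 : (0:ℝ) < (n:ℝ)^2 := by positivity
  have g1 : S1 ^ (p + 1) * h ≤ (n : ℝ) ^ (p - 1) * S2 := by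
    rw [← mul_le_mul_iff_of_pos_right hn2]
    nlinarith [f1]
  calc h ^ (p - 1) * h ^ 2 * S1 ^ (p + 1)
      = (h * h ^ (p - 1)) * (S1 ^ (p + 1) * h) := by ring
    _ ≤ (h * h ^ (p - 1)) * ((n : ℝ) ^ (p - 1) * S2) :=
        mul_le_mul_of_nonneg_left g1 (by positivity)
    _ = (n : ℝ) ^ (p - 1) * h ^ (p - 1) * (h * S2) := by ring
end

section
/- Let h > 0 and let f be defined on the grid {a, a+h, ..., b} ⊂ hℤ with f(a) ≥ h and (f(x+h) − f(x))/h ≥ 2 for all grid points x ∈ [a, b−h]. Then h·Σ_{x ∈ grid, a ≤ x < b} f(x) ≥ (b−a)^2. -/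
/-!
Summing the increments, `f (a + i h) ≥ h + 2 i h = (2i + 1) h`; the first `n` odd numbers add up
to `n²`, so `h · Σ f ≥ h² n²`.
-/

open Finset

theorem add_nsmul_le_of_le_sub_succ {α : Type*} [AddCommGroup α] [PartialOrder α]
    [IsOrderedAddMonoid α] {u : ℕ → α} {c d : α} {n : ℕ} (h0 : c ≤ u 0)
    (hstep : ∀ i < n, d ≤ u (i + 1) - u i) {i : ℕ} (hi : i ≤ n) : c + i • d ≤ u i := by
  have hsum : i • d ≤ ∑ j ∈ range i, (u (j + 1) - u j) := by
    simpa using card_nsmul_le_sum (range i) _ d fun j hj ↦ hstep j ((mem_range.mp hj).trans_le hi)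
  calc c + i • d ≤ u 0 + (u i - u 0) := add_le_add h0 (by rwa [sum_range_sub] at hsum)
    _ = u i := add_sub_cancel _ _

theorem sum_range_two_mul_add_one {R : Type*} [CommSemiring R] (n : ℕ) :
    ∑ i ∈ range n, (2 * (i : R) + 1) = (n : R) ^ 2 := by
  induction n with
  | zero => simp
  | succ n ih =>
    rw [sum_range_succ, ih]
    push_cast
    ring

theorem discrete_key_lemma_general (a h : ℝ) (hh : 0 < h) (n : ℕ)
    (f : ℝ → ℝ) (hfa : h ≤ f a)
    (hdiff : ∀ i < n, (f (a + (i + 1) * h) - f (a + i * h)) / h ≥ 2) :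
    h * ∑ i ∈ Finset.range n, f (a + i * h) ≥ (n * h) ^ 2 := by
  set u : ℕ → ℝ := fun i ↦ f (a + i * h)
  have hstep : ∀ i < n, 2 * h ≤ u (i + 1) - u i := fun i hi ↦ by
    have := hdiff i hi
    rw [ge_iff_le, le_div_iff₀ hh] at this
    simp only [u]
    push_cast
    linarith
  have hterm : ∀ i ∈ range n, (2 * i + 1) * h ≤ u i := fun i hi ↦ by
    have := add_nsmul_le_of_le_sub_succ (by simpa [u] using hfa) hstep (mem_range.mp hi).le
    rw [nsmul_eq_mul] at this
    linarith
  calc h * ∑ i ∈ range n, u i ≥ h * ∑ i ∈ range n, (2 * i + 1) * h :=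
        mul_le_mul_of_nonneg_left (sum_le_sum hterm) hh.le
    _ = (n * h) ^ 2 := by rw [← sum_mul, sum_range_two_mul_add_one]; ring

theorem discrete_key_lemma (a h : ℝ) (hh : 0 < h) (n : ℕ) (hn : 0 < n)
    (f : ℝ → ℝ) (hfa : h ≤ f a)
    (hdiff : ∀ i < n, (f (a + (i + 1) * h) - f (a + i * h)) / h ≥ 2) :
    h * ∑ i ∈ Finset.range n, f (a + i * h) ≥ (n * h) ^ 2 :=
  discrete_key_lemma_general a h hh n f hfa hdiff
end
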